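/- arXiv:1711.11416 — 3 statements merged into one kernel-verified Lean document; each statement's English description precedes it below -/
import Mathlib

section
/- Let a > 2 be real and define R(z) = e^{−iz}/(z − ia) + 1. Then the index of R along the real line vanishes: lim_{N→∞} ∫_{−N}^{N} R'(k)/R(k) dk = 0, where the integrals are over real k and R' is the complex derivative of R. Moreover Log(R(k)) → 0 as k → +∞ and as k → −∞ along the real axis, where Log is the principal branch of the complex logarithm. -/
open Complex Filter Topology

/-!
On the real line `R = 1 + e^{-ik}/(k - ia)` with `|e^{-ik}/(k - ia)| = 1/|k - ia| ≤ 1/a < 1`,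
so `R` takes values in the disc `|w - 1| < 1`, where the principal logarithm is holomorphic.
Hence `Log ∘ R` is a primitive of `R'/R` along `ℝ` and `∫_{-N}^{N} R'/R = Log R(N) - Log R(-N)`.
Both terms tend to `Log 1 = 0`, because `|R(k) - 1| = 1/|k - ia| → 0` as `|k| → ∞`.
-/

section LogarithmicDerivative

variable {f : ℂ → ℂ} {U : Set ℂ}

theorem continuous_deriv_div_comp_ofReal (hU : IsOpen U) (hf : DifferentiableOn ℂ f U)
    (hℝ : ∀ k : ℝ, (k : ℂ) ∈ U) (hne : ∀ k : ℝ, f k ≠ 0) :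
    Continuous fun k : ℝ => deriv f k / f k := by
  have hderiv : ContinuousOn (deriv f) U :=
    (hf.contDiffOn (n := 1) hU).continuousOn_deriv_of_isOpen hU le_rfl
  rw [continuous_iff_continuousAt]
  intro k
  refine ContinuousAt.div ?_ ?_ (hne k)
  · exact (hderiv.continuousAt (hU.mem_nhds (hℝ k))).comp continuous_ofReal.continuousAt
  · exact ((hf.differentiableAt (hU.mem_nhds (hℝ k))).continuousAt).comp
      continuous_ofReal.continuousAt

theorem integral_deriv_div_eq_log_sub_log (hU : IsOpen U) (hf : DifferentiableOn ℂ f U)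
    (hℝ : ∀ k : ℝ, (k : ℂ) ∈ U) (hslit : ∀ k : ℝ, f k ∈ slitPlane) (a b : ℝ) :
    ∫ k in a..b, deriv f k / f k = log (f b) - log (f a) := by
  have hint : IntervalIntegrable (fun k : ℝ => deriv f k / f k) MeasureTheory.volume a b :=
    (continuous_deriv_div_comp_ofReal hU hf hℝ
      (fun k => slitPlane_ne_zero (hslit k))).intervalIntegrable a b
  refine intervalIntegral.integral_eq_sub_of_hasDerivAt (f := fun t : ℝ => log (f t))
    (fun k _ => ?_) hint
  exact ((hf.differentiableAt (hU.mem_nhds (hℝ k))).hasDerivAt.comp_ofReal).clog_real (hslit k)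

theorem tendsto_integral_deriv_div_of_tendsto_log (hU : IsOpen U)
    (hf : DifferentiableOn ℂ f U) (hℝ : ∀ k : ℝ, (k : ℂ) ∈ U)
    (hslit : ∀ k : ℝ, f k ∈ slitPlane) {c : ℂ}
    (hlim : Tendsto (fun k : ℝ => log (f k)) (cocompact ℝ) (𝓝 c)) :
    Tendsto (fun N : ℝ => ∫ k in (-N)..N, deriv f k / f k) atTop (𝓝 0) := by
  have htop := hlim.mono_left atTop_le_cocompact
  have hbot := (hlim.mono_left atBot_le_cocompact).comp tendsto_neg_atTop_atBot
  simpa only [integral_deriv_div_eq_log_sub_log hU hf hℝ hslit, sub_self, Function.comp_def,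
    ofReal_neg] using htop.sub hbot

end LogarithmicDerivative

noncomputable def R (a : ℝ) (z : ℂ) : ℂ :=
  exp (-I * z) / (z - I * a) + 1

theorem differentiableOn_R (a : ℝ) : DifferentiableOn ℂ (R a) {z | z ≠ I * a} := by
  intro z hz
  have hden : z - I * a ≠ 0 := sub_ne_zero.2 hz
  unfold R
  fun_prop (disch := exact hden)

theorem ofReal_ne_I_mul {a : ℝ} (ha : a ≠ 0) (k : ℝ) : (k : ℂ) ≠ I * a := by
  intro h
  exact ha (by simpa using congrArg im h.symm)

theorem norm_R_sub_one (a k : ℝ) : ‖R a k - 1‖ = ‖(k : ℂ) - I * a‖⁻¹ := by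
  simp [R, norm_exp]

theorem R_mem_slitPlane {a : ℝ} (ha : 1 < |a|) (k : ℝ) : R a k ∈ slitPlane := by
  refine ball_one_subset_slitPlane ?_
  rw [mem_ball_iff_norm, norm_R_sub_one]
  have him : |a| ≤ ‖(k : ℂ) - I * a‖ := by simpa using abs_im_le_norm ((k : ℂ) - I * a)
  exact inv_lt_one_of_one_lt₀ (ha.trans_le him)

theorem tendsto_R_cocompact (a : ℝ) : Tendsto (fun k : ℝ => R a k) (cocompact ℝ) (𝓝 1) := by
  rw [tendsto_iff_norm_sub_tendsto_zero]
  have hre : ∀ k : ℝ, ‖k‖ ≤ ‖(k : ℂ) - I * a‖ := fun k => by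
    simpa using abs_re_le_norm ((k : ℂ) - I * a)
  simpa only [norm_R_sub_one, Pi.inv_def] using
    (tendsto_atTop_mono hre tendsto_norm_cocompact_atTop).inv_tendsto_atTop

theorem tendsto_log_R_cocompact (a : ℝ) :
    Tendsto (fun k : ℝ => log (R a k)) (cocompact ℝ) (𝓝 0) := by
  simpa only [log_one, Function.comp_def] using ((continuousAt_clog one_mem_slitPlane).tendsto.comp (tendsto_R_cocompact a))

/-- For `a > 2` and `R(z) = e^{−iz}/(z − ia) + 1`, the index of `R` along the real
line vanishes: `∫_{−N}^{N} R'(k)/R(k) dk → 0` as `N → ∞`; moreover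
`Log (R k) → 0` as `k → ±∞` along the real axis. -/
theorem index_R_eq_zero (a : ℝ) (ha : 2 < a) :
    Tendsto (fun N : ℝ => ∫ k : ℝ in (-N)..N,
        deriv (fun z : ℂ => Complex.exp (-Complex.I * z) / (z - Complex.I * a) + 1) k /
          (Complex.exp (-Complex.I * k) / ((k : ℂ) - Complex.I * a) + 1))
      atTop (nhds 0) ∧
    Tendsto (fun k : ℝ =>
        Complex.log (Complex.exp (-Complex.I * k) / ((k : ℂ) - Complex.I * a) + 1))
      atTop (nhds 0) ∧
    Tendsto (fun k : ℝ =>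
        Complex.log (Complex.exp (-Complex.I * k) / ((k : ℂ) - Complex.I * a) + 1))
      atBot (nhds 0) := by
  have habs : 1 < |a| := by rw [abs_of_pos (by linarith)]; linarith
  have hℝ : ∀ k : ℝ, (k : ℂ) ∈ {z | z ≠ I * a} := ofReal_ne_I_mul (by linarith)
  exact ⟨tendsto_integral_deriv_div_of_tendsto_log isOpen_ne (differentiableOn_R a) hℝ
      (R_mem_slitPlane habs) (tendsto_log_R_cocompact a),
    (tendsto_log_R_cocompact a).mono_left atTop_le_cocompact,
    (tendsto_log_R_cocompact a).mono_left atBot_le_cocompact⟩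
end

section
/- Let a > 2 be real and define R(z) = e^{−iz}/(z − ia) + 1. Then there exist N ∈ ℕ and a sequence (t_n)_{n≥N} of complex numbers such that R(t_n) = 0 for every n ≥ N and t_n − (2πn + π + i·log(2πn)) → 0 as n → ∞; that is, R has a sequence of zeros t_n = 2πn + φ_n + iβ_n with φ_n = π + o(1) and β_n = log(2πn) + o(1). -/
/-!
`R(t) = 0` means `e^{-it} = -(t - ia)`. With `θₙ = 2πn + π`, so that `e^{-iθₙ} = -1`, this
holds at every fixed point of `Fₙ(t) = θₙ + i log(t - ia)`. On the half-plane `re t ≥ 2` the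
logarithm term is `1/2`-Lipschitz, and `re Fₙ(t) = θₙ - arg(t - ia) ≥ 2πn`, so `Fₙ` contracts
the half-plane into itself and has a fixed point `tₙ` there. By the a-posteriori contraction
estimate, `tₙ` lies within `2 |Fₙ(cₙ) - cₙ|` of `cₙ = θₙ + i log(2πn)`, and
`|Fₙ(cₙ) - cₙ| = |log(cₙ - ia) - log(2πn)| ≤ |π + i(log(2πn) - a)| / (2πn) → 0`.
-/

open Complex Filter Topology Set Function
open scoped Real

theorem exists_isFixedPt_dist_le_of_lipschitzOnWith {α : Type*} [MetricSpace α] [CompleteSpace α]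
    {s : Set α} (hs : IsClosed s) {f : α → α} (hfs : MapsTo f s s) {K : NNReal} (hK : K < 1)
    (hf : LipschitzOnWith K f s) {x : α} (hx : x ∈ s) :
    ∃ y ∈ s, IsFixedPt f y ∧ dist x y ≤ dist x (f x) / (1 - K) := by
  have := hs.completeSpace_coe
  have : Nonempty s := ⟨⟨x, hx⟩⟩
  have hcontr : ContractingWith K (hfs.restrict f s s) := ⟨hK, hf.mapsToRestrict hfs⟩
  set y := ContractingWith.fixedPoint _ hcontr
  exact ⟨y, y.2, congrArg Subtype.val hcontr.fixedPoint_isFixedPt,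
    hcontr.dist_le_of_fixedPoint ⟨x, hx⟩ hcontr.fixedPoint_isFixedPt⟩

theorem norm_log_sub_log_le_of_le_re {r : ℝ} (hr : 0 < r) {z w : ℂ} (hz : r ≤ z.re)
    (hw : r ≤ w.re) : ‖log z - log w‖ ≤ ‖z - w‖ / r := by
  rw [div_eq_inv_mul]
  refine (convex_halfSpace_re_ge r).norm_image_sub_le_of_norm_hasDerivWithin_le
    (fun x hx ↦ (hasDerivAt_log (Or.inl (hr.trans_le hx))).hasDerivWithinAt) (fun x hx ↦ ?_)
    hw hz
  rw [norm_inv]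
  exact inv_anti₀ hr ((show r ≤ x.re from hx).trans (re_le_norm x))

noncomputable def zeroMap (a θ : ℝ) (t : ℂ) : ℂ := θ + I * log (t - I * a)

section zeroMap

variable (a : ℝ)

theorem zeroMap_re (θ : ℝ) (t : ℂ) : (zeroMap a θ t).re = θ - arg (t - I * a) := by
  simp [zeroMap, log_im, sub_eq_add_neg]

theorem mapsTo_zeroMap {θ : ℝ} (hθ : 2 + π ≤ θ) :
    MapsTo (zeroMap a θ) {z | 2 ≤ z.re} {z | 2 ≤ z.re} := fun t _ ↦ by
  simp only [mem_ofPred_eq, zeroMap_re]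
  linarith [arg_le_pi (t - I * a)]

theorem lipschitzOnWith_zeroMap (θ : ℝ) :
    LipschitzOnWith 2⁻¹ (zeroMap a θ) {z | 2 ≤ z.re} := by
  refine LipschitzOnWith.of_dist_le_mul fun z hz w hw ↦ ?_
  have hre : ∀ t : ℂ, (t - I * a).re = t.re := by simp
  have := norm_log_sub_log_le_of_le_re two_pos (z := z - I * a) (w := w - I * a)
    (by rw [hre]; exact hz) (by rw [hre]; exact hw)
  rw [dist_eq_norm, dist_eq_norm, NNReal.coe_inv, NNReal.coe_ofNat]
  calc ‖zeroMap a θ z - zeroMap a θ w‖ = ‖log (z - I * a) - log (w - I * a)‖ := by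
        simp [zeroMap, ← mul_sub]
    _ ≤ 2⁻¹ * ‖z - w‖ := by simpa [div_eq_inv_mul] using this

theorem dist_zeroMap_le {x : ℝ} (hx : 0 < x) :
    dist (((x + π : ℝ) : ℂ) + I * Real.log x)
        (zeroMap a (x + π) (((x + π : ℝ) : ℂ) + I * Real.log x)) ≤
      ‖(π : ℂ) + I * (Real.log x - a)‖ / x := by
  set c : ℂ := ((x + π : ℝ) : ℂ) + I * Real.log x
  have hc : c - I * a - x = π + I * (Real.log x - a) := by simp only [c]; push_cast; ring
  calc dist c (zeroMap a (x + π) c) = ‖log (c - I * a) - log x‖ := by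
        rw [dist_comm, dist_eq_norm, zeroMap, ← ofReal_log hx.le]
        simp [c, ← mul_sub]
    _ ≤ ‖π + I * (Real.log x - a)‖ / x := by
        rw [← hc]
        exact norm_log_sub_log_le_of_le_re hx (by simp [c, Real.pi_pos.le]) (by simp)

theorem tendsto_norm_pi_add_I_mul_log_sub_div :
    Tendsto (fun x : ℝ ↦ ‖(π : ℂ) + I * (Real.log x - a)‖ / x) atTop (𝓝 0) := by
  have hbound : ∀ᶠ x : ℝ in atTop,
      ‖(π : ℂ) + I * (Real.log x - a)‖ / x ≤ (π + |a|) / x + Real.log x / x := by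
    filter_upwards [eventually_ge_atTop 1] with x hx
    rw [← add_div, div_le_div_iff_of_pos_right (by linarith)]
    calc ‖(π : ℂ) + I * (Real.log x - a)‖ ≤ π + (Real.log x + |a|) := by
          refine (norm_add_le _ _).trans (add_le_add (by simp [abs_of_pos Real.pi_pos]) ?_)
          rw [norm_mul, norm_I, one_mul, ← ofReal_sub, norm_real, Real.norm_eq_abs]
          exact (abs_sub _ _).trans (by rw [abs_of_nonneg (Real.log_nonneg hx)])
      _ = π + |a| + Real.log x := by ring
  have hlim := ((tendsto_const_nhds (x := π + |a|)).div_atTop tendsto_id).add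
    Real.isLittleO_log_id_atTop.tendsto_div_nhds_zero
  rw [add_zero] at hlim
  exact squeeze_zero' ((eventually_ge_atTop 0).mono fun x ↦ div_nonneg (norm_nonneg _))
    hbound hlim

end zeroMap

theorem exp_neg_I_mul_two_pi_mul_add_pi (n : ℕ) :
    exp (-I * ((2 * π * n + π : ℝ) : ℂ)) = -1 := by
  have : -I * ((2 * π * n + π : ℝ) : ℂ) = (-n : ℤ) * (2 * π * I) + -(π * I) := by
    push_cast; ring
  rw [this, exp_add, exp_int_mul_two_pi_mul_I, exp_neg, exp_pi_mul_I]
  norm_num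

theorem exp_neg_I_mul_div_add_one_eq_zero_of_isFixedPt {a θ : ℝ} (hθ : exp (-I * θ) = -1)
    {t : ℂ} (ht : IsFixedPt (zeroMap a θ) t) (hta : t - I * a ≠ 0) :
    exp (-I * t) / (t - I * a) + 1 = 0 := by
  have : -I * t = -I * θ + log (t - I * a) := by
    conv_lhs => rw [← ht.eq, zeroMap]
    ring_nf; rw [I_sq]; ring
  rw [this, exp_add, hθ, exp_log hta, neg_one_mul, neg_div, div_self hta, neg_add_cancel]

theorem exists_isFixedPt_zeroMap_near (a : ℝ) {n : ℕ} (hn : 1 ≤ n) :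
    ∃ t : ℂ, 2 ≤ t.re ∧ IsFixedPt (zeroMap a (2 * π * n + π)) t ∧
      ‖t - (((2 * π * n + π : ℝ) : ℂ) + I * Real.log (2 * π * n))‖
        ≤ 2 * (‖(π : ℂ) + I * (Real.log (2 * π * n) - a)‖ / (2 * π * n)) := by
  set c : ℂ := ((2 * π * n + π : ℝ) : ℂ) + I * Real.log (2 * π * n)
  have hx : 0 < 2 * π * n := by positivity
  have hθ : 2 + π ≤ 2 * π * n + π := by
    nlinarith [Real.pi_gt_three, (Nat.one_le_cast (α := ℝ)).2 hn]
  obtain ⟨t, htH, htfix, htdist⟩ := exists_isFixedPt_dist_le_of_lipschitzOnWith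
    (isClosed_le continuous_const continuous_re) (mapsTo_zeroMap a hθ) (by norm_num)
    (lipschitzOnWith_zeroMap a _) (x := c) (by simp [c]; linarith [Real.pi_pos])
  refine ⟨t, htH, htfix, ?_⟩
  calc ‖t - c‖ = dist c t := by rw [dist_comm, dist_eq_norm]
    _ ≤ 2 * dist c (zeroMap a (2 * π * n + π) c) := by
      convert htdist using 1; norm_num; ring
    _ ≤ _ := by gcongr; exact dist_zeroMap_le a hx

theorem R_has_zero_sequence_general (a : ℝ) :
    ∃ (N : ℕ) (t : ℕ → ℂ),
      (∀ n : ℕ, N ≤ n →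
        Complex.exp (-Complex.I * t n) / (t n - Complex.I * a) + 1 = 0) ∧
      Tendsto (fun n : ℕ =>
          t n - (((2 * π * n + π : ℝ) : ℂ) + Complex.I * (Real.log (2 * π * n) : ℂ)))
        atTop (nhds 0) := by
  choose! t htH htfix htdist using fun n (hn : 1 ≤ n) ↦ exists_isFixedPt_zeroMap_near a hn
  refine ⟨1, t, fun n hn ↦ ?_, ?_⟩
  · refine exp_neg_I_mul_div_add_one_eq_zero_of_isFixedPt (exp_neg_I_mul_two_pi_mul_add_pi n)
      (htfix n hn) fun h ↦ ?_
    have hre : (t n).re = 0 := by simpa using congrArg re h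
    linarith [htH n hn]
  · refine squeeze_zero_norm' ((eventually_ge_atTop 1).mono htdist) ?_
    simpa using ((tendsto_norm_pi_add_I_mul_log_sub_div a).comp
      (tendsto_natCast_atTop_atTop.const_mul_atTop Real.two_pi_pos)).const_mul 2

/-- For `a > 2`, `R(z) = e^{−iz}/(z − ia) + 1` has a sequence of zeros
`t_n = 2πn + π + i log(2πn) + o(1)`. -/
theorem R_has_zero_sequence (a : ℝ) (ha : 2 < a) :
    ∃ (N : ℕ) (t : ℕ → ℂ),
      (∀ n : ℕ, N ≤ n →
        Complex.exp (-Complex.I * t n) / (t n - Complex.I * a) + 1 = 0) ∧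
      Tendsto (fun n : ℕ =>
          t n - (((2 * π * n + π : ℝ) : ℂ) + Complex.I * (Real.log (2 * π * n) : ℂ)))
        atTop (nhds 0) :=
  R_has_zero_sequence_general a
end

section
/- Let a > 2 be real, R(t) = e^{−it}/(t − ia) + 1, and let Log denote the principal branch of the complex logarithm. Then for every complex z with Im(z) > 0, the function t ↦ Log(R(t))/(t − z) is integrable on ℝ and ∫_ℝ Log(R(t))/(t − z) dt = 0. -/
/-! On the closed lower half-plane `|e^{-iw}| = e^{Im w} ≤ 1` and `|w - ia| ≥ max(a, |w|)`, so
`|R w - 1| ≤ 1/|w - ia| ≤ 1/2`. Hence `log ∘ R` is holomorphic there with `|log (R w)| ≤ 3/(2|w|)`,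
and since `z` lies in the upper half-plane the integrand `log (R w) / (w - z)` is `O(1/|w|²)`.
Cauchy's theorem on the rectangle `[-T, T] × [-T, 0]` turns `∫_{-T}^{T}` into an integral over the
three other sides, which is `O(1/T)`. -/

open Complex MeasureTheory Filter Set

theorem Continuous.integrable_of_norm_le_div_sq {E : Type*} [NormedAddCommGroup E] {g : ℝ → E}
    {C r : ℝ} (hg : Continuous g) (hbound : ∀ t : ℝ, r ≤ |t| → ‖g t‖ ≤ C / t ^ 2) :
    Integrable g := by
  refine hg.locallyIntegrable.integrable_of_isBigO_cocompact (g := fun t : ℝ => (1 + t ^ 2)⁻¹)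
    ?_ (integrable_inv_one_add_sq.integrableAtFilter _)
  refine Asymptotics.IsBigO.of_bound (2 * C) ?_
  filter_upwards [tendsto_norm_cocompact_atTop.eventually (eventually_ge_atTop (max r 1))]
    with t ht
  rw [Real.norm_eq_abs] at ht
  have ht2 : 1 ≤ t ^ 2 := by nlinarith [sq_abs t, le_of_max_le_right ht]
  have hgt := hbound t (le_of_max_le_left ht)
  have hC : 0 ≤ C := by
    have := (norm_nonneg _).trans hgt
    rwa [le_div_iff₀ (by positivity), zero_mul] at this
  rw [norm_inv, Real.norm_of_nonneg (by positivity), ← div_eq_mul_inv]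
  refine hgt.trans ?_
  rw [div_le_div_iff₀ (by positivity) (by positivity)]
  nlinarith

section LowerHalfPlane

variable {E : Type*} [NormedAddCommGroup E] [NormedSpace ℂ E] {f : ℂ → E}
  {C r : ℝ}

theorem norm_intervalIntegral_le_of_lowerHalfPlane (hc : ContinuousOn f {w | w.im ≤ 0})
    (hd : DifferentiableOn ℂ f {w | w.im < 0})
    (hbound : ∀ w : ℂ, w.im ≤ 0 → r ≤ ‖w‖ → ‖f w‖ ≤ C / ‖w‖ ^ 2) {T : ℝ} (hT : 0 < T)
    (hrT : r ≤ T) :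
    ‖∫ t in -T..T, f t‖ ≤ 4 * C / T := by
  have hC : 0 ≤ C := by
    have hnorm : ‖-T * I‖ = T := by simp [abs_of_pos hT]
    have := (norm_nonneg _).trans (hbound (-T * I) (by simp [hT.le]) (hrT.trans_eq hnorm.symm))
    rwa [hnorm, le_div_iff₀ (by positivity), zero_mul] at this
  have hside : ∀ w : ℂ, w.im ≤ 0 → T ≤ ‖w‖ → ‖f w‖ ≤ C / T ^ 2 := fun w hw hTw =>
    (hbound w hw (hrT.trans hTw)).trans (by gcongr)
  have hcauchy := integral_boundary_rect_eq_zero_of_continuousOn_of_differentiableOn f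
    ⟨-T, -T⟩ ⟨T, 0⟩ (hc.mono fun w hw => ?_) (hd.mono fun w hw => ?_)
  rotate_left
  · exact hw.2.2.trans (max_le (by linarith) le_rfl)
  · exact hw.2.2.trans_le (max_le (by linarith) le_rfl)
  simp only [ofReal_zero, zero_mul, add_zero] at hcauchy
  have hbottom : ‖∫ x in -T..T, f (x + (-T : ℝ) * I)‖ ≤ C / T ^ 2 * (2 * T) := by
    refine (intervalIntegral.norm_integral_le_of_norm_le_const fun x _ =>
      hside _ ?_ ?_).trans_eq ?_
    · simp [hT.le]
    · simpa [abs_of_pos hT] using abs_im_le_norm ((x : ℂ) + (-T : ℝ) * I)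
    · rw [abs_of_pos (by linarith)]; ring
  have hvertical : ∀ s : ℝ, |s| = T → ‖∫ y in -T..0, f (s + y * I)‖ ≤ C / T ^ 2 * T := by
    intro s hs
    refine (intervalIntegral.norm_integral_le_of_norm_le_const fun y hy =>
      hside _ ?_ ?_).trans_eq ?_
    · simpa using (uIoc_of_le (neg_nonpos.2 hT.le) ▸ hy).2
    · simpa [hs] using abs_re_le_norm ((s : ℂ) + y * I)
    · simp [abs_of_pos hT]
  calc ‖∫ t in -T..T, f t‖
      = ‖(∫ x in -T..T, f (x + (-T : ℝ) * I)) + I • (∫ y in -T..0, f (T + y * I)) -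
          I • (∫ y in -T..0, f ((-T : ℝ) + y * I))‖ := by
        congr 1
        rw [eq_comm, ← sub_eq_zero, ← hcauchy]
        abel
    _ ≤ C / T ^ 2 * (2 * T) + C / T ^ 2 * T + C / T ^ 2 * T := by
        refine (norm_sub_le _ _).trans
          (add_le_add ((norm_add_le _ _).trans (add_le_add hbottom ?_)) ?_)
        · rw [norm_smul, norm_I, one_mul]; exact hvertical T (abs_of_pos hT)
        · rw [norm_smul, norm_I, one_mul]; exact hvertical (-T) (by simp [abs_of_pos hT])
    _ = 4 * C / T := by field_simp; ring

theorem integrable_ofReal_and_integral_eq_zero_of_lowerHalfPlane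
    (hc : ContinuousOn f {w | w.im ≤ 0})
    (hd : DifferentiableOn ℂ f {w | w.im < 0})
    (hbound : ∀ w : ℂ, w.im ≤ 0 → r ≤ ‖w‖ → ‖f w‖ ≤ C / ‖w‖ ^ 2) :
    Integrable (fun t : ℝ => f t) ∧ ∫ t : ℝ, f t = 0 := by
  have hint : Integrable (fun t : ℝ => f t) := by
    refine (hc.comp_continuous continuous_ofReal fun t => by simp).integrable_of_norm_le_div_sq
      (C := C) (r := r) fun t ht => ?_
    simpa using hbound t (by simp) (by simpa using ht)
  refine ⟨hint, tendsto_nhds_unique (intervalIntegral_tendsto_integral hint tendsto_neg_atTop_atBot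
    tendsto_id) (squeeze_zero_norm' ?_ ((tendsto_const_nhds (x := 4 * C)).div_atTop tendsto_id))⟩
  filter_upwards [eventually_gt_atTop 0, eventually_ge_atTop r] with T hT hrT
  exact norm_intervalIntegral_le_of_lowerHalfPlane hc hd hbound hT hrT

end LowerHalfPlane

section

variable {a : ℝ} {w z : ℂ}

lemma sub_ne_zero_of_im_nonpos_of_im_pos (hz : 0 < z.im) (hw : w.im ≤ 0) : w - z ≠ 0 :=
  sub_ne_zero.2 fun h => by rw [h] at hw; linarith

lemma le_norm_sub_I_mul (hw : w.im ≤ 0) : a ≤ ‖w - I * a‖ := by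
  have h := abs_im_le_norm (w - I * a)
  rw [show (w - I * a).im = w.im - a by simp] at h
  linarith [neg_abs_le (w.im - a)]

lemma norm_le_norm_sub_I_mul (ha : 0 ≤ a) (hw : w.im ≤ 0) : ‖w‖ ≤ ‖w - I * a‖ := by
  rw [← sq_le_sq₀ (norm_nonneg _) (norm_nonneg _), Complex.sq_norm, Complex.sq_norm,
    normSq_apply, normSq_apply]
  simp only [sub_re, sub_im, mul_re, mul_im, I_re, I_im, ofReal_re, ofReal_im]
  nlinarith

end

namespace IntegralLogR

noncomputable def R (a : ℝ) (w : ℂ) : ℂ := exp (-I * w) / (w - I * a) + 1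

variable {a : ℝ} {w z : ℂ}

lemma norm_R_sub_one_le (hw : w.im ≤ 0) : ‖R a w - 1‖ ≤ ‖w - I * a‖⁻¹ := by
  rw [R, add_sub_cancel_right, norm_div, div_eq_mul_inv]
  refine mul_le_of_le_one_left (by positivity) ?_
  rw [norm_exp]
  simpa using hw

lemma norm_R_sub_one_le_half (ha : 2 ≤ a) (hw : w.im ≤ 0) : ‖R a w - 1‖ ≤ 1 / 2 :=
  (norm_R_sub_one_le hw).trans <| by
    rw [one_div]; exact inv_anti₀ two_pos (ha.trans (le_norm_sub_I_mul hw))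

lemma R_mem_slitPlane (ha : 2 ≤ a) (hw : w.im ≤ 0) : R a w ∈ slitPlane := by
  simpa using mem_slitPlane_of_norm_lt_one ((norm_R_sub_one_le_half ha hw).trans_lt one_half_lt_one)

lemma norm_log_R_le (ha : 2 ≤ a) (hw : w.im ≤ 0) : ‖log (R a w)‖ ≤ 3 / 2 * ‖w - I * a‖⁻¹ := by
  simpa using (norm_log_one_add_half_le_self (norm_R_sub_one_le_half ha hw)).trans
    (mul_le_mul_of_nonneg_left (norm_R_sub_one_le hw) (by norm_num))

lemma differentiableAt_log_R_div (ha : 2 ≤ a) (hz : 0 < z.im) (hw : w.im ≤ 0) :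
    DifferentiableAt ℂ (fun w => log (R a w) / (w - z)) w := by
  have hden : w - I * a ≠ 0 :=
    sub_ne_zero_of_im_nonpos_of_im_pos (by simpa using two_pos.trans_le ha) hw
  have hR : DifferentiableAt ℂ (R a) w := by unfold R; fun_prop (disch := exact hden)
  exact (hR.clog (R_mem_slitPlane ha hw)).div (by fun_prop)
    (sub_ne_zero_of_im_nonpos_of_im_pos hz hw)

lemma norm_log_R_div_le (ha : 2 ≤ a) (hz : 0 < z.im) (hw : w.im ≤ 0) (hzw : 2 * ‖z‖ ≤ ‖w‖) :
    ‖log (R a w) / (w - z)‖ ≤ 3 / ‖w‖ ^ 2 := by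
  have hz0 : 0 < ‖z‖ := norm_pos_iff.2 fun h => by simp [h] at hz
  have hw0 : 0 < ‖w‖ := by linarith
  have hwz : ‖w‖ / 2 ≤ ‖w - z‖ := by linarith [norm_sub_norm_le w z]
  have hwa : ‖w - I * a‖⁻¹ ≤ ‖w‖⁻¹ := inv_anti₀ hw0 (norm_le_norm_sub_I_mul (by linarith) hw)
  calc ‖log (R a w) / (w - z)‖ ≤ 3 / 2 * ‖w‖⁻¹ / (‖w‖ / 2) := by
        rw [norm_div]
        gcongr
        exact (norm_log_R_le ha hw).trans (by gcongr)
    _ = 3 / ‖w‖ ^ 2 := by field_simp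

end IntegralLogR

/-- For `a > 2`, `R(t) = e^{−it}/(t − ia) + 1`, and `Im z > 0`, the function
`t ↦ Log(R t)/(t − z)` is integrable on `ℝ` and its integral vanishes. -/
theorem integral_log_R_upper (a : ℝ) (ha : 2 < a) (z : ℂ) (hz : 0 < z.im) :
    Integrable (fun t : ℝ =>
      Complex.log (Complex.exp (-Complex.I * t) / ((t : ℂ) - Complex.I * a) + 1) /
        ((t : ℂ) - z)) ∧
    (∫ t : ℝ,
      Complex.log (Complex.exp (-Complex.I * t) / ((t : ℂ) - Complex.I * a) + 1) /
        ((t : ℂ) - z)) = 0 := by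
  have hd : ∀ w : ℂ, w.im ≤ 0 →
      DifferentiableAt ℂ (fun w => log (IntegralLogR.R a w) / (w - z)) w :=
    fun w hw => IntegralLogR.differentiableAt_log_R_div ha.le hz hw
  exact integrable_ofReal_and_integral_eq_zero_of_lowerHalfPlane
    (fun w hw => (hd w hw).continuousAt.continuousWithinAt)
    (fun w hw => (hd w hw.le).differentiableWithinAt)
    (fun w hw hzw => IntegralLogR.norm_log_R_div_le ha.le hz hw hzw)
end
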